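/- arXiv:2111.03298 — 3 statements merged into one kernel-verified Lean document; each statement's English description precedes it below -/
import Mathlib

section
/- Let G ∈ QT_2 and let G' = G[V(G) \ {x, w, v}] be the subgraph of G induced by all vertices except x, w, v. If γ_t(G') ≤ a(G') + 1, then γ_t(G) ≤ a(G) + 1. -/
open SimpleGraph

/-- The total domination number of a graph. -/
noncomputable def totalDominationNumber {V : Type*} (G : SimpleGraph V) : ℕ :=
  sInf {k | ∃ D : Finset V, (∀ v : V, ∃ u ∈ D, G.Adj v u) ∧ D.card = k}

/-- The annihilation number of a graph. -/
noncomputable def annihilationNumber {V : Type*} (G : SimpleGraph V) : ℕ :=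
  sSup {k | ∃ S : Finset V, S.card = k ∧ ∑ v ∈ S, (G.neighborSet v).ncard ≤ G.edgeSet.ncard}

/-- Statuses used in the definition of the family `Γ`. -/
inductive Status
  | A | B | C

/-- A graph whose vertices are labeled with statuses. -/
structure LGraph where
  V : Type
  G : SimpleGraph V
  sta : V → Status

/-- Status-preserving isomorphism of labeled graphs. -/
def LIso (L₁ L₂ : LGraph) : Prop :=
  ∃ e : L₁.G ≃g L₂.G, ∀ v, L₂.sta (e v) = L₁.sta v

/-- The base labeled tree `T₀`: a path `P₆` whose two leaves have status `C`,
whose two support vertices have status `A`, and whose middle vertices have status `B`. -/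
def baseT0 : LGraph where
  V := Fin 6
  G := SimpleGraph.fromRel (fun i j => (i : ℕ) + 1 = (j : ℕ))
  sta := ![Status.C, Status.A, Status.B, Status.B, Status.A, Status.C]

/-- Operation `o₁`: to a labeled graph `L` with chosen vertex `y`, attach a new path
`x–w–v–z` (the vertices `Sum.inr 0, 1, 2, 3`) together with the edge `x y`, statuses
`sta x = sta w = B`, `sta v = A`, `sta z = C`. -/
def o1Ext (L : LGraph) (y : L.V) : LGraph where
  V := L.V ⊕ Fin 4
  G := (L.G.map Function.Embedding.inl) ⊔
    SimpleGraph.fromEdgeSet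
      {s(Sum.inl y, Sum.inr 0), s(Sum.inr 0, Sum.inr 1),
       s(Sum.inr 1, Sum.inr 2), s(Sum.inr 2, Sum.inr 3)}
  sta := Sum.elim L.sta ![Status.B, Status.B, Status.A, Status.C]

/-- Operation `o₂`: to a labeled graph `L` with chosen vertex `y`, attach a new path
`x–w–v` (the vertices `Sum.inr 0, 1, 2`) together with the edge `x y`, statuses
`sta x = B`, `sta w = A`, `sta v = C`. -/
def o2Ext (L : LGraph) (y : L.V) : LGraph where
  V := L.V ⊕ Fin 3
  G := (L.G.map Function.Embedding.inl) ⊔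
    SimpleGraph.fromEdgeSet
      {s(Sum.inl y, Sum.inr 0), s(Sum.inr 0, Sum.inr 1), s(Sum.inr 1, Sum.inr 2)}
  sta := Sum.elim L.sta ![Status.B, Status.A, Status.C]

/-- The family `Γ` of labeled trees (closed under status-preserving isomorphism):
it contains `T₀` and is closed under operation `o₁` (applied at a leaf of status `C`)
and operation `o₂` (applied at a vertex of status `B`). -/
inductive InGamma : LGraph → Prop
  | base (L : LGraph) : LIso baseT0 L → InGamma L
  | op1 (L : LGraph) (y : L.V) (hL : InGamma L) (hsta : L.sta y = Status.C)
      (hleaf : (L.G.neighborSet y).ncard = 1) (L' : LGraph) (h : LIso (o1Ext L y) L') :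
      InGamma L'
  | op2 (L : LGraph) (y : L.V) (hL : InGamma L) (hsta : L.sta y = Status.B)
      (L' : LGraph) (h : LIso (o2Ext L y) L') : InGamma L'

/-- Add one new vertex `h = Sum.inr ()` to `G` and join it to every vertex in `S`. -/
def attachVertex {V : Type} (G : SimpleGraph V) (S : Set V) : SimpleGraph (V ⊕ Unit) :=
  (G.map Function.Embedding.inl) ⊔
    SimpleGraph.fromEdgeSet {e | ∃ u ∈ S, e = s(Sum.inl u, Sum.inr ())}

/-!
Removing the pendant path `x – w – v` hanging at `y` leaves `G'`. A total dominating set of `G'`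
together with `w, v` totally dominates `G`, so `γₜ(G) ≤ γₜ(G') + 2`; if `G'` has no total
dominating set, some vertex other than `y` is isolated in `G'`, hence in `G`, and `γₜ(G) = 0` as
the infimum of the empty set. On the other side `m(G) = m(G') + 3`, and `x, w, v` have degrees
`2, 2, 1`: a maximum annihilation set of `G'` grows by `w, v`, and if it contains `y` then `y` is
traded for `x` as well, which is affordable because status-`B` vertices of trees in `Γ` have two
neighbours, so `y` has degree at least `2` in `G'`. Hence `a(G) ≥ a(G') + 2`.
-/

section TotalDominationAnnihilation

variable {V : Type*} {G : SimpleGraph V}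

lemma totalDominationNumber_le_card {D : Finset V} (hD : ∀ v, ∃ u ∈ D, G.Adj v u) :
    totalDominationNumber G ≤ D.card :=
  Nat.sInf_le ⟨D, hD, rfl⟩

lemma exists_card_eq_totalDominationNumber [Finite V] (h : ∀ v, ∃ u, G.Adj v u) :
    ∃ D : Finset V, (∀ v, ∃ u ∈ D, G.Adj v u) ∧ D.card = totalDominationNumber G := by
  have := Fintype.ofFinite V
  refine Nat.sInf_mem
    (s := {k | ∃ D : Finset V, (∀ v, ∃ u ∈ D, G.Adj v u) ∧ D.card = k}) ?_
  exact ⟨_, Finset.univ, fun v => (h v).imp fun u hu => ⟨Finset.mem_univ u, hu⟩, rfl⟩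

lemma totalDominationNumber_eq_zero_of_forall_not_adj {u : V} (hu : ∀ v, ¬G.Adj u v) :
    totalDominationNumber G = 0 := by
  rw [totalDominationNumber, Nat.sInf_eq_zero]
  refine .inr (Set.eq_empty_of_forall_notMem ?_)
  rintro k ⟨D, hD, -⟩
  obtain ⟨v, -, huv⟩ := hD u
  exact hu v huv

lemma bddAbove_annihilating [Finite V] :
    BddAbove {k | ∃ S : Finset V, S.card = k ∧
      ∑ v ∈ S, (G.neighborSet v).ncard ≤ G.edgeSet.ncard} := by
  have := Fintype.ofFinite V
  exact ⟨Fintype.card V, fun k ⟨S, hS, _⟩ => hS ▸ S.card_le_univ⟩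

lemma card_le_annihilationNumber [Finite V] {S : Finset V}
    (hS : ∑ v ∈ S, (G.neighborSet v).ncard ≤ G.edgeSet.ncard) :
    S.card ≤ annihilationNumber G :=
  le_csSup bddAbove_annihilating ⟨S, rfl, hS⟩

lemma exists_card_eq_annihilationNumber [Finite V] :
    ∃ S : Finset V, S.card = annihilationNumber G ∧
      ∑ v ∈ S, (G.neighborSet v).ncard ≤ G.edgeSet.ncard :=
  Nat.sSup_mem (s := {k | ∃ S : Finset V, S.card = k ∧
      ∑ v ∈ S, (G.neighborSet v).ncard ≤ G.edgeSet.ncard}) ⟨0, ∅, rfl, by simp⟩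
    bddAbove_annihilating

end TotalDominationAnnihilation

namespace SimpleGraph

variable {V : Type*} {G : SimpleGraph V}

lemma ncard_neighborSet_induce (s : Set V) (a : s) :
    ((G.induce s).neighborSet a).ncard = (G.neighborSet a ∩ s).ncard := by
  rw [← Set.ncard_image_of_injective _ Subtype.val_injective]
  congr 1
  ext b
  aesop

lemma ncard_edgeSet_induce (s : Set V) :
    (G.induce s).edgeSet.ncard = (G.edgeSet ∩ s.sym2).ncard := by
  rw [← Set.ncard_image_of_injective _ (Sym2.map.injective Subtype.val_injective)]
  congr 1
  ext e
  induction e using Sym2.ind with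
  | h a b => aesop (add simp [Sym2.exists, adj_comm])

lemma two_le_ncard_neighborSet_induce [Finite V] {s : Set V} {y a b : V} (hy : y ∈ s)
    (ha : a ∈ s) (hb : b ∈ s) (hab : a ≠ b) (hya : G.Adj y a) (hyb : G.Adj y b) :
    2 ≤ ((G.induce s).neighborSet ⟨y, hy⟩).ncard := by
  rw [ncard_neighborSet_induce, ← Set.ncard_pair hab]
  exact Set.ncard_le_ncard (Set.pair_subset ⟨hya, ha⟩ ⟨hyb, hb⟩)

end SimpleGraph

section PendantPath

variable {V : Type*} {G : SimpleGraph V} {x w v y : V}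

lemma neighborSet_subset_compl_of_pendantPath (hx : G.neighborSet x = {y, w})
    (hw : G.neighborSet w = {x, v}) (hv : G.neighborSet v = {w}) {u : V}
    (hu : u ∈ ({x, w, v} : Set V)ᶜ) (huy : u ≠ y) :
    G.neighborSet u ⊆ ({x, w, v} : Set V)ᶜ := by
  intro b hub hb
  have hbu : u ∈ G.neighborSet b := G.adj_symm hub
  simp only [Set.mem_compl_iff, Set.mem_insert_iff, Set.mem_singleton_iff, not_or] at hu hb
  rcases hb with rfl | rfl | rfl <;> simp_all

lemma edgeSet_diff_sym2_compl_of_pendantPath (hx : G.neighborSet x = {y, w})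
    (hw : G.neighborSet w = {x, v}) (hv : G.neighborSet v = {w}) :
    G.edgeSet \ ({x, w, v} : Set V)ᶜ.sym2 = {s(y, x), s(x, w), s(w, v)} := by
  have hx' (b : V) : G.Adj x b ↔ b = y ∨ b = w := by rw [← mem_neighborSet, hx]; rfl
  have hw' (b : V) : G.Adj w b ↔ b = x ∨ b = v := by rw [← mem_neighborSet, hw]; rfl
  have hv' (b : V) : G.Adj v b ↔ b = w := by rw [← mem_neighborSet, hv]; rfl
  ext e
  induction e using Sym2.ind with
  | h a b =>
    simp only [Set.mem_sdiff, mem_edgeSet, Set.mk_mem_sym2_iff, Set.mem_compl_iff,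
      Set.mem_insert_iff, Set.mem_singleton_iff, Sym2.eq_iff]
    grind [G.adj_comm a b]

lemma ne_of_pendantPath (hx : G.neighborSet x = {y, w}) (hv : G.neighborSet v = {w})
    (hy : y ∈ ({x, w, v} : Set V)ᶜ) : x ≠ w ∧ x ≠ v ∧ w ≠ v := by
  refine ⟨G.ne_of_adj (show w ∈ G.neighborSet x by simp [hx]), ?_,
    (G.ne_of_adj (show w ∈ G.neighborSet v by simp [hv])).symm⟩
  rintro rfl
  have hyw : y = w := by simpa [hv] using (show y ∈ G.neighborSet x by simp [hx])
  exact hy (by simp [hyw])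

lemma ncard_neighborSet_induce_of_pendantPath (hx : G.neighborSet x = {y, w})
    (hw : G.neighborSet w = {x, v}) (hv : G.neighborSet v = {w})
    (a : ↥({x, w, v} : Set V)ᶜ) (ha : a.1 ≠ y) :
    ((G.induce ({x, w, v} : Set V)ᶜ).neighborSet a).ncard = (G.neighborSet a).ncard := by
  rw [ncard_neighborSet_induce,
    Set.inter_eq_left.mpr (neighborSet_subset_compl_of_pendantPath hx hw hv a.2 ha)]

lemma ncard_edgeSet_eq_induce_add_three_of_pendantPath [Finite V]
    (hx : G.neighborSet x = {y, w}) (hw : G.neighborSet w = {x, v})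
    (hv : G.neighborSet v = {w}) (hy : y ∈ ({x, w, v} : Set V)ᶜ) :
    G.edgeSet.ncard = (G.induce ({x, w, v} : Set V)ᶜ).edgeSet.ncard + 3 := by
  obtain ⟨hxw, hxv, -⟩ := ne_of_pendantPath hx hv hy
  simp only [Set.mem_compl_iff, Set.mem_insert_iff, Set.mem_singleton_iff, not_or] at hy
  rw [ncard_edgeSet_induce, ← Set.ncard_inter_add_ncard_sdiff_eq_ncard G.edgeSet,
    edgeSet_diff_sym2_compl_of_pendantPath hx hw hv, Set.ncard_insert_of_notMem,
    Set.ncard_pair] <;> simp [*]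

lemma totalDominationNumber_le_induce_add_two_of_pendantPath [Finite V]
    (hx : G.neighborSet x = {y, w}) (hw : G.neighborSet w = {x, v})
    (hv : G.neighborSet v = {w}) (hy : y ∈ ({x, w, v} : Set V)ᶜ)
    (hyA : ∃ b, (G.induce ({x, w, v} : Set V)ᶜ).Adj ⟨y, hy⟩ b) :
    totalDominationNumber G ≤ totalDominationNumber (G.induce ({x, w, v} : Set V)ᶜ) + 2 := by
  classical
  by_cases hA : ∀ a, ∃ b, (G.induce ({x, w, v} : Set V)ᶜ).Adj a b
  · obtain ⟨D, hD, hcard⟩ := exists_card_eq_totalDominationNumber hA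
    have hxw : G.Adj x w := show w ∈ G.neighborSet x by simp [hx]
    have hwv : G.Adj w v := show v ∈ G.neighborSet w by simp [hw]
    have hdom : ∀ a, ∃ b ∈ insert w (insert v (D.map (Function.Embedding.subtype _))),
        G.Adj a b := by
      intro a
      by_cases ha : a ∈ ({x, w, v} : Set V)ᶜ
      · obtain ⟨b, hb, hab⟩ := hD ⟨a, ha⟩
        exact ⟨b, Finset.mem_insert_of_mem <| Finset.mem_insert_of_mem <|
          Finset.mem_map_of_mem _ hb, hab⟩
      · simp only [Set.mem_compl_iff, not_not, Set.mem_insert_iff, Set.mem_singleton_iff] at ha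
        rcases ha with rfl | rfl | rfl
        · exact ⟨w, by simp, hxw⟩
        · exact ⟨v, by simp, hwv⟩
        · exact ⟨w, by simp, hwv.symm⟩
    calc totalDominationNumber G ≤ _ := totalDominationNumber_le_card hdom
      _ ≤ D.card + 2 := by
        grw [Finset.card_insert_le, Finset.card_insert_le, Finset.card_map]
      _ = _ := by rw [hcard]
  · simp only [not_forall, not_exists] at hA
    obtain ⟨⟨u, hu⟩, hiso⟩ := hA
    have huy : u ≠ y := by
      rintro rfl
      obtain ⟨b, hb⟩ := hyA
      exact hiso b hb
    have hG : totalDominationNumber G = 0 :=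
      totalDominationNumber_eq_zero_of_forall_not_adj (u := u) fun b hub =>
        hiso ⟨b, neighborSet_subset_compl_of_pendantPath hx hw hv hu huy hub⟩ hub
    omega

lemma card_add_card_le_annihilationNumber_of_pendantPath [Finite V]
    (hx : G.neighborSet x = {y, w}) (hw : G.neighborSet w = {x, v})
    (hv : G.neighborSet v = {w}) {T : Finset ↥({x, w, v} : Set V)ᶜ}
    (hT : ∀ a ∈ T, a.1 ≠ y)
    {P : Finset V} (hP : ↑P ⊆ ({x, w, v} : Set V))
    (hsum : ∑ a ∈ T, ((G.induce ({x, w, v} : Set V)ᶜ).neighborSet a).ncard +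
      ∑ u ∈ P, (G.neighborSet u).ncard ≤ G.edgeSet.ncard) :
    T.card + P.card ≤ annihilationNumber G := by
  classical
  have hdisj : Disjoint (T.map (Function.Embedding.subtype _)) P := by
    rw [Finset.disjoint_left]
    rintro _ hu huP
    obtain ⟨a, -, rfl⟩ := Finset.mem_map.mp hu
    exact a.2 (hP huP)
  have hdeg : ∑ u ∈ T.map (Function.Embedding.subtype _), (G.neighborSet u).ncard =
      ∑ a ∈ T, ((G.induce ({x, w, v} : Set V)ᶜ).neighborSet a).ncard := by
    rw [Finset.sum_map]
    exact Finset.sum_congr rfl fun a ha =>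
      (ncard_neighborSet_induce_of_pendantPath hx hw hv a (hT a ha)).symm
  have := card_le_annihilationNumber (S := T.map (Function.Embedding.subtype _) ∪ P)
    (by rwa [Finset.sum_union hdisj, hdeg])
  rwa [Finset.card_union_of_disjoint hdisj, Finset.card_map] at this

lemma annihilationNumber_induce_add_two_le_of_pendantPath [Finite V]
    (hx : G.neighborSet x = {y, w}) (hw : G.neighborSet w = {x, v})
    (hv : G.neighborSet v = {w}) (hy : y ∈ ({x, w, v} : Set V)ᶜ)
    (hdeg : 2 ≤ ((G.induce ({x, w, v} : Set V)ᶜ).neighborSet ⟨y, hy⟩).ncard) :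
    annihilationNumber (G.induce ({x, w, v} : Set V)ᶜ) + 2 ≤ annihilationNumber G := by
  classical
  obtain ⟨hxw, hxv, hwv⟩ := ne_of_pendantPath hx hv hy
  have hyw : y ≠ w := by rintro rfl; simp at hy
  have dx : (G.neighborSet x).ncard = 2 := by rw [hx, Set.ncard_pair hyw]
  have dw : (G.neighborSet w).ncard = 2 := by rw [hw, Set.ncard_pair hxv]
  have dv : (G.neighborSet v).ncard = 1 := by rw [hv, Set.ncard_singleton]
  have hm := ncard_edgeSet_eq_induce_add_three_of_pendantPath hx hw hv hy
  obtain ⟨S, hcard, hsum⟩ :=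
    exists_card_eq_annihilationNumber (G := G.induce ({x, w, v} : Set V)ᶜ)
  rw [← hcard]
  by_cases hyS : ⟨y, hy⟩ ∈ S
  · have hsum' := Finset.sum_erase_add S (fun a => ((G.induce _).neighborSet a).ncard) hyS
    have := card_add_card_le_annihilationNumber_of_pendantPath hx hw hv (T := S.erase ⟨y, hy⟩)
      (P := {x, w, v}) (fun a ha h => Finset.ne_of_mem_erase ha (Subtype.ext h)) (by simp)
      (by rw [Finset.sum_insert (by simp [hxw, hxv]), Finset.sum_pair hwv, dx, dw, dv]; omega)
    rw [Finset.card_erase_of_mem hyS, Finset.card_insert_of_notMem (by simp [hxw, hxv]),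
      Finset.card_pair hwv] at this
    have := Finset.card_pos.mpr ⟨_, hyS⟩
    omega
  · have := card_add_card_le_annihilationNumber_of_pendantPath hx hw hv (T := S) (P := {w, v})
      (fun a ha h => hyS (Subtype.ext (a2 := ⟨y, hy⟩) h ▸ ha)) (by simp)
      (by rw [Finset.sum_pair hwv, dw, dv]; omega)
    rwa [Finset.card_pair hwv] at this

theorem totalDominationNumber_le_annihilationNumber_add_one_of_pendantPath [Finite V]
    (hx : G.neighborSet x = {y, w}) (hw : G.neighborSet w = {x, v})
    (hv : G.neighborSet v = {w}) (hy : y ∈ ({x, w, v} : Set V)ᶜ)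
    (hdeg : 2 ≤ ((G.induce ({x, w, v} : Set V)ᶜ).neighborSet ⟨y, hy⟩).ncard)
    (h : totalDominationNumber (G.induce ({x, w, v} : Set V)ᶜ) ≤
      annihilationNumber (G.induce ({x, w, v} : Set V)ᶜ) + 1) :
    totalDominationNumber G ≤ annihilationNumber G + 1 := by
  have hyA : ((G.induce ({x, w, v} : Set V)ᶜ).neighborSet ⟨y, hy⟩).Nonempty :=
    Set.nonempty_of_ncard_ne_zero (by omega)
  have := totalDominationNumber_le_induce_add_two_of_pendantPath hx hw hv hy hyA
  have := annihilationNumber_induce_add_two_le_of_pendantPath hx hw hv hy hdeg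
  omega

end PendantPath

def LGraph.BVertexHasTwoNeighbors (L : LGraph) : Prop :=
  ∀ u, L.sta u = Status.B → ∃ a b, a ≠ b ∧ L.G.Adj u a ∧ L.G.Adj u b

lemma LIso.finite {L₁ L₂ : LGraph} (h : LIso L₁ L₂) [Finite L₁.V] : Finite L₂.V :=
  let ⟨e, _⟩ := h
  .of_equiv _ e.toEquiv

lemma LIso.bVertexHasTwoNeighbors {L₁ L₂ : LGraph} (h : LIso L₁ L₂)
    (h₁ : L₁.BVertexHasTwoNeighbors) : L₂.BVertexHasTwoNeighbors := by
  obtain ⟨e, he⟩ := h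
  intro u hu
  obtain ⟨a, b, hab, ha, hb⟩ := h₁ (e.symm u) (by rw [← he, e.apply_symm_apply, hu])
  refine ⟨e a, e b, e.injective.ne hab, ?_, ?_⟩
  · simpa using e.map_adj_iff.mpr ha
  · simpa using e.map_adj_iff.mpr hb

lemma baseT0_bVertexHasTwoNeighbors : baseT0.BVertexHasTwoNeighbors := by
  intro u hu
  change Fin 6 at u
  fin_cases u <;> simp [baseT0] at hu ⊢
  · exact ⟨1, 3, by decide, by decide, by decide⟩
  · exact ⟨2, 4, by decide, by decide, by decide⟩

lemma LGraph.BVertexHasTwoNeighbors.o1Ext {L : LGraph} (h : L.BVertexHasTwoNeighbors)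
    (y : L.V) : (o1Ext L y).BVertexHasTwoNeighbors := by
  unfold LGraph.BVertexHasTwoNeighbors _root_.o1Ext
  rintro (u | i) hu
  · obtain ⟨a, b, hab, ha, hb⟩ := h u hu
    exact ⟨.inl a, .inl b, by simpa using hab, by simpa using ha, by simpa using hb⟩
  · fin_cases i <;> simp at hu
    · exact ⟨.inl y, .inr 1, by simp, by simp, by simp⟩
    · exact ⟨.inr 0, .inr 2, by simp, by simp, by simp⟩

lemma LGraph.BVertexHasTwoNeighbors.o2Ext {L : LGraph} (h : L.BVertexHasTwoNeighbors)
    (y : L.V) : (o2Ext L y).BVertexHasTwoNeighbors := by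
  unfold LGraph.BVertexHasTwoNeighbors _root_.o2Ext
  rintro (u | i) hu
  · obtain ⟨a, b, hab, ha, hb⟩ := h u hu
    exact ⟨.inl a, .inl b, by simpa using hab, by simpa using ha, by simpa using hb⟩
  · fin_cases i <;> simp at hu
    exact ⟨.inl y, .inr 1, by simp, by simp, by simp⟩

lemma InGamma.finite {L : LGraph} (h : InGamma L) : Finite L.V := by
  induction h with
  | base L hL =>
    have : Finite baseT0.V := inferInstanceAs (Finite (Fin 6))
    exact hL.finite
  | op1 L y _ _ _ _ hL =>
    have : Finite (o1Ext L y).V := inferInstanceAs (Finite (L.V ⊕ Fin 4))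
    exact hL.finite
  | op2 L y _ _ _ hL =>
    have : Finite (o2Ext L y).V := inferInstanceAs (Finite (L.V ⊕ Fin 3))
    exact hL.finite

lemma InGamma.bVertexHasTwoNeighbors {L : LGraph} (h : InGamma L) :
    L.BVertexHasTwoNeighbors := by
  induction h with
  | base L hL => exact hL.bVertexHasTwoNeighbors baseT0_bVertexHasTwoNeighbors
  | op1 L y _ _ _ _ hL ih => exact hL.bVertexHasTwoNeighbors (ih.o1Ext y)
  | op2 L y _ _ _ hL ih => exact hL.bVertexHasTwoNeighbors (ih.o2Ext y)

section QuasiTree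

variable {L : LGraph} {y : L.V} {N : Set L.V}

lemma attachVertex_o2Ext_adj_inl_inl {a b : L.V} :
    (attachVertex (o2Ext L y).G (Sum.inl '' N)).Adj (.inl (.inl a)) (.inl (.inl b)) ↔
      L.G.Adj a b := by
  unfold o2Ext
  simp [attachVertex]

lemma attachVertex_o2Ext_neighborSet_inr_zero :
    (attachVertex (o2Ext L y).G (Sum.inl '' N)).neighborSet (.inl (.inr 0)) =
      {.inl (.inl y), .inl (.inr 1)} := by
  unfold o2Ext
  ext ((p | i) | ⟨⟩)
  · simp [attachVertex, eq_comm]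
  · fin_cases i <;> simp [attachVertex]
  · simp [attachVertex]

lemma attachVertex_o2Ext_neighborSet_inr_one :
    (attachVertex (o2Ext L y).G (Sum.inl '' N)).neighborSet (.inl (.inr 1)) =
      {.inl (.inr 0), .inl (.inr 2)} := by
  unfold o2Ext
  ext ((p | i) | ⟨⟩)
  · simp [attachVertex]
  · fin_cases i <;> simp [attachVertex]
  · simp [attachVertex]

lemma attachVertex_o2Ext_neighborSet_inr_two :
    (attachVertex (o2Ext L y).G (Sum.inl '' N)).neighborSet (.inl (.inr 2)) =
      {.inl (.inr 1)} := by
  unfold o2Ext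
  ext ((p | i) | ⟨⟩)
  · simp [attachVertex]
  · fin_cases i <;> simp [attachVertex]
  · simp [attachVertex]

end QuasiTree

theorem stmt_2_general (T : LGraph) (y : T.V)
    (hT : InGamma T) (hy : T.sta y = Status.B)
    (N : Finset T.V)
    (G : SimpleGraph ((T.V ⊕ Fin 3) ⊕ Unit))
    (hG : G = attachVertex (o2Ext T y).G (Sum.inl '' (N : Set T.V)))
    (h' :
      totalDominationNumber (G.induce
        {u | u ∉ ({Sum.inl (Sum.inr 0), Sum.inl (Sum.inr 1),
          Sum.inl (Sum.inr 2)} : Set ((T.V ⊕ Fin 3) ⊕ Unit))}) ≤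
      annihilationNumber (G.induce
        {u | u ∉ ({Sum.inl (Sum.inr 0), Sum.inl (Sum.inr 1),
          Sum.inl (Sum.inr 2)} : Set ((T.V ⊕ Fin 3) ⊕ Unit))}) + 1) :
    totalDominationNumber G ≤ annihilationNumber G + 1 := by
  have := hT.finite
  have hx : G.neighborSet (.inl (.inr 0)) = {.inl (.inl y), .inl (.inr 1)} := by
    rw [hG]; exact attachVertex_o2Ext_neighborSet_inr_zero
  have hw : G.neighborSet (.inl (.inr 1)) = {.inl (.inr 0), .inl (.inr 2)} := by
    rw [hG]; exact attachVertex_o2Ext_neighborSet_inr_one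
  have hv : G.neighborSet (.inl (.inr 2)) = {.inl (.inr 1)} := by
    rw [hG]; exact attachVertex_o2Ext_neighborSet_inr_two
  have hyA : (Sum.inl (Sum.inl y) : (T.V ⊕ Fin 3) ⊕ Unit) ∈
      ({Sum.inl (Sum.inr 0), Sum.inl (Sum.inr 1), Sum.inl (Sum.inr 2)} : Set _)ᶜ := by simp
  obtain ⟨a, b, hab, ha, hb⟩ := hT.bVertexHasTwoNeighbors y hy
  have hdeg := two_le_ncard_neighborSet_induce (G := G) hyA (a := .inl (.inl a))
    (b := .inl (.inl b)) (by simp) (by simp) (by simpa using hab)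
    (by rw [hG]; exact attachVertex_o2Ext_adj_inl_inl.mpr ha)
    (by rw [hG]; exact attachVertex_o2Ext_adj_inl_inl.mpr hb)
  exact totalDominationNumber_le_annihilationNumber_add_one_of_pendantPath hx hw hv hyA hdeg h'

/-- Let `G ∈ QT₂`, i.e. `G` is obtained from a tree `T' = o2Ext T y ∈ Γ₂`
(where `T ∈ Γ`, `y` has status `B`, and `x, w, v` are the vertices added in the last
step) and a new vertex `h` by adding `t ≥ 2` edges between `h` and `V(T') \ {x, w, v}`.
If `G' = G[V(G) \ {x, w, v}]` satisfies `γₜ(G') ≤ a(G') + 1`, then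
`γₜ(G) ≤ a(G) + 1`. -/
theorem stmt_2 (T : LGraph) (y : T.V)
    (hT : InGamma T) (hy : T.sta y = Status.B)
    (N : Finset T.V) (htN : 2 ≤ N.card)
    (G : SimpleGraph ((T.V ⊕ Fin 3) ⊕ Unit))
    (hG : G = attachVertex (o2Ext T y).G (Sum.inl '' (N : Set T.V)))
    (h' :
      totalDominationNumber (G.induce
        {u | u ∉ ({Sum.inl (Sum.inr 0), Sum.inl (Sum.inr 1),
          Sum.inl (Sum.inr 2)} : Set ((T.V ⊕ Fin 3) ⊕ Unit))}) ≤
      annihilationNumber (G.induce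
        {u | u ∉ ({Sum.inl (Sum.inr 0), Sum.inl (Sum.inr 1),
          Sum.inl (Sum.inr 2)} : Set ((T.V ⊕ Fin 3) ⊕ Unit))}) + 1) :
    totalDominationNumber G ≤ annihilationNumber G + 1 :=
  stmt_2_general T y hT hy N G hG h'
end

section
/- Let G and H be connected graphs, where H has at least ⌈n(G)/3 + 2⌉ vertices and a universal vertex, and let v ∈ V(G). Then γ_t(G_v∗H) ≤ a(G_v∗H) + 1, where G_v∗H is the universally-identifying graph of G and H at v. -/
open SimpleGraph

/-- The universally-identifying graph `G_v ∗ H`: given `v ∈ V(G)` and a graph `H` with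
a universal vertex `h`, identify the vertex `v` of `G` with the vertex `h` of `H`.
The vertices are those of `G` together with the vertices of `H` other than `h`;
the identified vertex is `Sum.inl v`. -/
def uidGraph {V W : Type*} (G : SimpleGraph V) (v : V) (H : SimpleGraph W) (h : W) :
    SimpleGraph (V ⊕ {w : W // w ≠ h}) :=
  SimpleGraph.fromRel (fun a b =>
    (∃ x y, G.Adj x y ∧ a = Sum.inl x ∧ b = Sum.inl y) ∨
    (∃ (x y : {w : W // w ≠ h}), H.Adj x y ∧ a = Sum.inr x ∧ b = Sum.inr y) ∨
    (∃ (y : {w : W // w ≠ h}), H.Adj h y ∧ a = Sum.inl v ∧ b = Sum.inr y))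

/-!
Root a BFS tree of `G` at `v` and split `V(G)` into the three classes of depth modulo `3`.
Two consecutive classes, with each childless vertex of the first replaced by its parent,
dominate every vertex of `G` other than `v`; the cheapest of the three choices has at most
`(2 n(G) + 2) / 3` vertices. Adding `v` and one vertex of `H` gives a total dominating set of
`G_v ∗ H`. On the other hand the `⌊n/2⌋` vertices of smallest degree in any graph have degree sum
at most `m`, so `a ≥ ⌊n/2⌋`, and the lower bound on `n(H)` makes `⌊n(G_v ∗ H)/2⌋` large enough.
-/

open Finset

namespace SimpleGraph

variable {V : Type*} {G : SimpleGraph V}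

theorem Connected.exists_adj_dist_add_one_eq (hG : G.Connected) {v x : V} (hx : x ≠ v) :
    ∃ y, G.Adj x y ∧ G.dist v y + 1 = G.dist v x := by
  obtain ⟨p, hp⟩ := hG.exists_walk_length_eq_dist x v
  cases p with
  | nil => exact absurd rfl hx
  | @cons _ y _ hxy q =>
    have hq := dist_le q
    have htri := hG.dist_triangle (u := v) (v := y) (w := x)
    rw [dist_eq_one_iff_adj.mpr hxy.symm] at htri
    rw [Walk.length_cons, dist_comm] at hp
    rw [dist_comm] at hq
    exact ⟨y, hxy, by omega⟩

theorem exists_finset_forall_ne_exists_adj_of_depth [Fintype V] [DecidableEq V] {v : V}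
    (d : V → ℕ) (par : V → V) (hpar : ∀ x, x ≠ v → G.Adj x (par x) ∧ d (par x) + 1 = d x)
    {k : ℕ} (hk : k < 3) :
    ∃ S : Finset V, v ∈ S ∧
      #S ≤ #(insert v (univ.filter fun x => d x % 3 = (k + 1) % 3)) +
        #(univ.filter fun x => d x % 3 = k) ∧
      ∀ x, x ≠ v → ∃ y ∈ S, G.Adj x y := by
  classical
  set nextLayer := univ.filter fun x => d x % 3 = (k + 1) % 3
  set layer := univ.filter fun x => d x % 3 = k
  let proxy (x : V) : V := if ∃ y, G.Adj x y ∧ d y = d x + 1 then x else par x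
  have hmem (y : V) : y ∈ insert v nextLayer ∪ layer.image proxy ↔
      y = v ∨ d y % 3 = (k + 1) % 3 ∨ ∃ z, d z % 3 = k ∧ proxy z = y := by
    simp [nextLayer, layer]
  refine ⟨insert v nextLayer ∪ layer.image proxy, mem_union_left _ (mem_insert_self _ _),
    (card_union_le _ _).trans (Nat.add_le_add_left card_image_le _), fun x hx => ?_⟩
  obtain ⟨hxp, hdp⟩ := hpar x hx
  by_cases hxk : d x % 3 = k
  · by_cases hchild : ∃ y, G.Adj x y ∧ d y = d x + 1
    · obtain ⟨y, hxy, hdy⟩ := hchild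
      exact ⟨y, (hmem y).2 (.inr (.inl (by omega))), hxy⟩
    · exact ⟨par x, (hmem _).2 (.inr (.inr ⟨x, hxk, if_neg hchild⟩)), hxp⟩
  · refine ⟨par x, (hmem _).2 (.inr ?_), hxp⟩
    by_cases hpk : d (par x) % 3 = k
    · exact .inr ⟨par x, hpk, if_pos ⟨x, hxp.symm, hdp.symm⟩⟩
    · exact .inl (by omega)

theorem Connected.exists_finset_forall_ne_exists_adj [Fintype V] (hG : G.Connected) (v : V) :
    ∃ S : Finset V, v ∈ S ∧ 3 * #S ≤ 2 * Fintype.card V + 2 ∧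
      ∀ x, x ≠ v → ∃ y ∈ S, G.Adj x y := by
  classical
  choose! par hpar using fun x (hx : x ≠ v) => hG.exists_adj_dist_add_one_eq hx
  set d := G.dist v
  have hsum : #{x | d x % 3 = 0} + #{x | d x % 3 = 1} + #{x | d x % 3 = 2} =
      Fintype.card V := by
    have := card_eq_sum_card_fiberwise (s := univ) (t := range 3) (f := fun x => d x % 3)
      (fun x _ => mem_range.mpr (Nat.mod_lt _ (by norm_num)))
    rw [card_univ, sum_range_succ, sum_range_succ, sum_range_one] at this
    exact this.symm
  have hv : v ∈ ({x | d x % 3 = 0} : Finset V) := by simp [d]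
  have := card_insert_le v ({x | d x % 3 = 1} : Finset V)
  have := card_insert_le v ({x | d x % 3 = 2} : Finset V)
  obtain ⟨S₀, hv₀, hS₀, hdom₀⟩ := exists_finset_forall_ne_exists_adj_of_depth d par hpar
    (k := 0) (by norm_num)
  obtain ⟨S₁, hv₁, hS₁, hdom₁⟩ := exists_finset_forall_ne_exists_adj_of_depth d par hpar
    (k := 1) (by norm_num)
  obtain ⟨S₂, hv₂, hS₂, hdom₂⟩ := exists_finset_forall_ne_exists_adj_of_depth d par hpar
    (k := 2) (by norm_num)
  -- `v` already lies in class `0`, so only two of the three choices pay for adding it.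
  simp only [Nat.reduceAdd, Nat.reduceMod, insert_eq_of_mem hv] at hS₀ hS₁ hS₂
  rcases (by omega : 3 * #S₀ ≤ 2 * Fintype.card V + 2 ∨ 3 * #S₁ ≤ 2 * Fintype.card V + 2 ∨
      3 * #S₂ ≤ 2 * Fintype.card V + 2) with h | h | h
  · exact ⟨S₀, hv₀, h, hdom₀⟩
  · exact ⟨S₁, hv₁, h, hdom₁⟩
  · exact ⟨S₂, hv₂, h, hdom₂⟩

end SimpleGraph

theorem Finset.exists_card_eq_half_two_mul_sum_le {α : Type*} [Fintype α] (f : α → ℕ) :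
    ∃ S : Finset α, #S = Fintype.card α / 2 ∧ 2 * ∑ x ∈ S, f x ≤ ∑ x, f x := by
  classical
  have hne : (univ.powersetCard (Fintype.card α / 2) : Finset (Finset α)).Nonempty := by
    rw [powersetCard_nonempty, card_univ]
    omega
  obtain ⟨S, hS, hmin⟩ := exists_min_image _ (fun T => ∑ x ∈ T, f x) hne
  obtain ⟨-, hScard⟩ := mem_powersetCard.mp hS
  obtain ⟨T, hTS, hTcard⟩ : ∃ T ⊆ Sᶜ, #T = Fintype.card α / 2 :=
    exists_subset_card_eq (by rw [card_compl, hScard]; omega)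
  have hST : ∑ x ∈ S, f x ≤ ∑ x ∈ T, f x :=
    hmin T (mem_powersetCard.mpr ⟨subset_univ _, hTcard⟩)
  have hTc : ∑ x ∈ T, f x ≤ ∑ x ∈ Sᶜ, f x := sum_le_sum_of_subset hTS
  have hsplit := sum_add_sum_compl S f
  exact ⟨S, hScard, by omega⟩

namespace SimpleGraph

variable {V : Type*} (G : SimpleGraph V)

theorem totalDominationNumber_le_card (D : Finset V) (hD : ∀ x, ∃ y ∈ D, G.Adj x y) :
    totalDominationNumber G ≤ #D :=
  Nat.sInf_le ⟨D, hD, rfl⟩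

theorem card_div_two_le_annihilationNumber [Fintype V] :
    Fintype.card V / 2 ≤ annihilationNumber G := by
  classical
  obtain ⟨S, hScard, hSsum⟩ := exists_card_eq_half_two_mul_sum_le fun x => G.degree x
  have hdeg (x : V) : (G.neighborSet x).ncard = G.degree x := by
    rw [← card_neighborFinset_eq_degree, ← Set.ncard_coe_finset, coe_neighborFinset]
  have hedges : G.edgeSet.ncard = #G.edgeFinset := by
    rw [← Set.ncard_coe_finset, coe_edgeFinset]
  refine le_csSup ⟨Fintype.card V, ?_⟩ ⟨S, hScard, ?_⟩
  · rintro k ⟨T, rfl, -⟩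
    exact card_le_univ T
  · have := G.sum_degrees_eq_twice_card_edges
    simp only [hdeg, hedges]
    omega

end SimpleGraph

section UidGraph

variable {V W : Type*} (G : SimpleGraph V) (v : V) (H : SimpleGraph W) (h : W)

theorem uidGraph_adj_inl_inl {x y : V} (hxy : G.Adj x y) :
    (uidGraph G v H h).Adj (.inl x) (.inl y) := by
  rw [uidGraph, fromRel_adj]
  exact ⟨by simp [hxy.ne], .inl (.inl ⟨x, y, hxy, rfl, rfl⟩)⟩

theorem uidGraph_adj_inl_inr {w : {w : W // w ≠ h}} (hw : H.Adj h w) :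
    (uidGraph G v H h).Adj (.inl v) (.inr w) := by
  rw [uidGraph, fromRel_adj]
  exact ⟨by simp, .inl (.inr (.inr ⟨w, hw, rfl, rfl⟩))⟩

theorem totalDominationNumber_uidGraph_le (huniv : ∀ w : W, w ≠ h → H.Adj h w)
    (w₀ : {w : W // w ≠ h}) (S : Finset V) (hvS : v ∈ S)
    (hS : ∀ x, x ≠ v → ∃ y ∈ S, G.Adj x y) :
    totalDominationNumber (uidGraph G v H h) ≤ #S + 1 := by
  classical
  have hvw (w : {w : W // w ≠ h}) := uidGraph_adj_inl_inr G v H h (huniv w w.2)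
  refine (totalDominationNumber_le_card _ (insert (.inr w₀) (S.map .inl)) ?_).trans
    ((card_insert_le _ _).trans (by rw [card_map]))
  rintro (x | w)
  · by_cases hx : x = v
    · exact ⟨.inr w₀, mem_insert_self _ _, hx ▸ hvw w₀⟩
    · obtain ⟨y, hyS, hxy⟩ := hS x hx
      exact ⟨.inl y, mem_insert_of_mem (mem_map_of_mem _ hyS), uidGraph_adj_inl_inl G v H h hxy⟩
  · exact ⟨.inl v, mem_insert_of_mem (mem_map_of_mem _ hvS), (hvw w).symm⟩

end UidGraph

theorem stmt_11_general {V W : Type*} [Fintype V] [Fintype W]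
    (G : SimpleGraph V) (H : SimpleGraph W) (v : V) (h : W)
    (hG : G.Connected)
    (huniv : ∀ w : W, w ≠ h → H.Adj h w)
    (hcard : ⌈(Fintype.card V : ℚ) / 3 + 2⌉₊ ≤ Fintype.card W) :
    totalDominationNumber (uidGraph G v H h) ≤ annihilationNumber (uidGraph G v H h) + 1 := by
  classical
  have hW : Fintype.card V + 6 ≤ 3 * Fintype.card W := by
    have := Nat.ceil_le.mp hcard
    exact_mod_cast (by linarith : (Fintype.card V + 6 : ℚ) ≤ 3 * Fintype.card W)
  have hcardH : Fintype.card {w : W // w ≠ h} = Fintype.card W - 1 := by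
    simp [Fintype.card_subtype_compl]
  obtain ⟨w₀⟩ : Nonempty {w : W // w ≠ h} := Fintype.card_pos_iff.mp (by omega)
  obtain ⟨S, hvS, hS, hdom⟩ := hG.exists_finset_forall_ne_exists_adj v
  have hγ := totalDominationNumber_uidGraph_le G v H h huniv w₀ S hvS hdom
  have ha := (uidGraph G v H h).card_div_two_le_annihilationNumber
  rw [Fintype.card_sum, hcardH] at ha
  omega

/-- Let `G` and `H` be connected graphs, where `H` has at least
`⌈n(G)/3 + 2⌉` vertices and a universal vertex `h`, and let `v ∈ V(G)`. Then
`γₜ(G_v ∗ H) ≤ a(G_v ∗ H) + 1`. -/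
theorem stmt_11 {V W : Type*} [Fintype V] [Fintype W]
    (G : SimpleGraph V) (H : SimpleGraph W) (v : V) (h : W)
    (hG : G.Connected) (hH : H.Connected)
    (huniv : ∀ w : W, w ≠ h → H.Adj h w)
    (hcard : ⌈(Fintype.card V : ℚ) / 3 + 2⌉₊ ≤ Fintype.card W) :
    totalDominationNumber (uidGraph G v H h) ≤ annihilationNumber (uidGraph G v H h) + 1 :=
  stmt_11_general G H v h hG huniv hcard
end

section
/- For every graph G, a(G*) ≥ a(G), where G* is the double graph of G. -/
open SimpleGraph

/-- The double graph `G*` of `G`: two disjoint copies `G₁, G₂` of `G` (the copy of `u`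
in `Gᵢ` being `(u, i)`), where for each edge `uv` of `G` the edges `u₁v₂` and `u₂v₁`
are added; equivalently, `(u, i)` and `(v, j)` are adjacent iff `uv ∈ E(G)`. -/
def doubleGraph {V : Type*} (G : SimpleGraph V) : SimpleGraph (V × Fin 2) where
  Adj a b := G.Adj a.1 b.1
  symm := ⟨fun _ _ h => G.adj_symm h⟩
  loopless := ⟨fun a h => G.irrefl (v := a.1) h⟩

/-! Each vertex of `G` has a copy in `G*` of twice its degree, while `G*` has four times as many
edges as `G`; so the first copy of any set witnessing `a(G)` witnesses `a(G*)` as well. -/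

namespace SimpleGraph

theorem sum_ncard_neighborSet_eq_two_mul_ncard_edgeSet {V : Type*} [Fintype V]
    (G : SimpleGraph V) :
    ∑ v, (G.neighborSet v).ncard = 2 * G.edgeSet.ncard := by
  classical
  simp only [Set.ncard_eq_toFinset_card', Set.toFinset_card, card_neighborSet_eq_degree,
    ← coe_edgeFinset, Finset.coe_sort_coe, Fintype.card_coe]
  exact G.sum_degrees_eq_twice_card_edges

end SimpleGraph

theorem annihilationNumber_le_of_embedding {V W : Type*} [Finite W] {G : SimpleGraph V}
    {H : SimpleGraph W} (f : V ↪ W) (c : ℕ)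
    (hdeg : ∀ v, (H.neighborSet (f v)).ncard ≤ c * (G.neighborSet v).ncard)
    (hedge : c * G.edgeSet.ncard ≤ H.edgeSet.ncard) :
    annihilationNumber G ≤ annihilationNumber H := by
  have : Fintype W := Fintype.ofFinite W
  refine csSup_le_csSup ⟨Fintype.card W, ?_⟩ ⟨0, ∅, rfl, by simp⟩ ?_
  · rintro k ⟨S, rfl, -⟩
    exact S.card_le_univ
  · rintro k ⟨S, rfl, hS⟩
    refine ⟨S.map f, S.card_map f, ?_⟩
    calc ∑ w ∈ S.map f, (H.neighborSet w).ncard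
        = ∑ v ∈ S, (H.neighborSet (f v)).ncard := Finset.sum_map S f _
      _ ≤ ∑ v ∈ S, c * (G.neighborSet v).ncard := Finset.sum_le_sum fun v _ => hdeg v
      _ = c * ∑ v ∈ S, (G.neighborSet v).ncard := (Finset.mul_sum ..).symm
      _ ≤ c * G.edgeSet.ncard := Nat.mul_le_mul_left c hS
      _ ≤ H.edgeSet.ncard := hedge

section doubleGraph

variable {V : Type*} (G : SimpleGraph V)

theorem doubleGraph_neighborSet (p : V × Fin 2) :
    (doubleGraph G).neighborSet p = G.neighborSet p.1 ×ˢ Set.univ := by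
  ext
  simp [doubleGraph]

theorem ncard_doubleGraph_neighborSet (p : V × Fin 2) :
    ((doubleGraph G).neighborSet p).ncard = 2 * (G.neighborSet p.1).ncard := by
  rw [doubleGraph_neighborSet, Set.ncard_prod, Set.ncard_univ, Nat.card_fin, mul_comm]

theorem ncard_doubleGraph_edgeSet [Fintype V] :
    (doubleGraph G).edgeSet.ncard = 4 * G.edgeSet.ncard := by
  have hsum : 2 * (doubleGraph G).edgeSet.ncard = 2 * (4 * G.edgeSet.ncard) := by
    rw [← sum_ncard_neighborSet_eq_two_mul_ncard_edgeSet, Fintype.sum_prod_type]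
    simp only [ncard_doubleGraph_neighborSet, Finset.sum_const, Finset.card_univ,
      Fintype.card_fin, smul_eq_mul, ← Finset.mul_sum,
      sum_ncard_neighborSet_eq_two_mul_ncard_edgeSet]
    ring
  omega

end doubleGraph

/-- For every (finite) graph `G`, `a(G*) ≥ a(G)`. -/
theorem stmt_15 {V : Type*} [Fintype V] (G : SimpleGraph V) :
    annihilationNumber G ≤ annihilationNumber (doubleGraph G) :=
  annihilationNumber_le_of_embedding ⟨(·, 0), fun _ _ h => congrArg Prod.fst h⟩ 2
    (fun v => (ncard_doubleGraph_neighborSet G (v, 0)).le)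
    (by rw [ncard_doubleGraph_edgeSet]; omega)
end
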